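/- Assume every bidder's valuation is monotone gross substitute. For every price vector p ∈ ℕ^m, if there exists an over-demanded set at p (OD(p) ≠ ∅), then there exists a set in excess demand at p (ED(p) ≠ ∅). -/

import Mathlib

/-- Utility of a bundle `S` at prices `p`: `v(S) - p(S)` (an integer). -/
def util {m : ℕ} (v : Finset (Fin m) → ℕ) (p : Fin m → ℕ) (S : Finset (Fin m)) : ℤ :=
  (v S : ℤ) - ∑ j ∈ S, (p j : ℤ)

/-- Demand collection: bundles of maximum utility at prices `p`. -/
def demand {m : ℕ} (v : Finset (Fin m) → ℕ) (p : Fin m → ℕ) : Finset (Finset (Fin m)) :=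
  Finset.univ.filter fun D => ∀ T : Finset (Fin m), util v p T ≤ util v p D

lemma demand_nonempty {m : ℕ} (v : Finset (Fin m) → ℕ) (p : Fin m → ℕ) :
    (demand v p).Nonempty := by
  obtain ⟨D, hD, hmax⟩ := Finset.exists_max_image (Finset.univ : Finset (Finset (Fin m)))
    (util v p) ⟨∅, Finset.mem_univ ∅⟩
  exact ⟨D, Finset.mem_filter.2 ⟨Finset.mem_univ D, fun T => hmax T (Finset.mem_univ T)⟩⟩

/-- Maximum utility of a bidder at prices `p`. -/
def uMax {m : ℕ} (v : Finset (Fin m) → ℕ) (p : Fin m → ℕ) : ℤ :=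
  Finset.univ.sup' Finset.univ_nonempty (util v p)

/-- A valuation is monotone with respect to inclusion. -/
def MonotoneVal {m : ℕ} (v : Finset (Fin m) → ℕ) : Prop :=
  ∀ ⦃S T : Finset (Fin m)⦄, S ⊆ T → v S ≤ v T

/-- Gross substitute: if `S` is demanded at `p` and `q ≥ p`, some demanded set at `q`
contains every item of `S` whose price did not change. -/
def GrossSub {m : ℕ} (v : Finset (Fin m) → ℕ) : Prop :=
  ∀ p q : Fin m → ℕ, p ≤ q → ∀ S ∈ demand v p,
    ∃ S' ∈ demand v q, ∀ j ∈ S, p j = q j → j ∈ S'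

/-- Requirement `l_p(S)` of a single bidder. -/
def req {m : ℕ} (v : Finset (Fin m) → ℕ) (p : Fin m → ℕ) (S : Finset (Fin m)) : ℕ :=
  (demand v p).inf' (demand_nonempty v p) fun D => (S ∩ D).card

/-- Redundant `h_p(S)` of a single bidder. -/
def red {m : ℕ} (v : Finset (Fin m) → ℕ) (p : Fin m → ℕ) (S : Finset (Fin m)) : ℕ :=
  (demand v p).sup' (demand_nonempty v p) fun D => (S ∩ D).card

/-- Auction requirement `l^p(S)`. -/
def reqAll {m n : ℕ} (v : Fin n → Finset (Fin m) → ℕ) (p : Fin m → ℕ) (S : Finset (Fin m)) : ℕ :=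
  ∑ i, req (v i) p S

/-- Auction redundant `h^p(S)`. -/
def redAll {m n : ℕ} (v : Fin n → Finset (Fin m) → ℕ) (p : Fin m → ℕ) (S : Finset (Fin m)) : ℕ :=
  ∑ i, red (v i) p S

/-- Lyapunov function `L(p) = Σ_i u_i(p) + Σ_j p_j`. -/
def lyap {m n : ℕ} (v : Fin n → Finset (Fin m) → ℕ) (p : Fin m → ℕ) : ℤ :=
  ∑ i, uMax (v i) p + ∑ j, (p j : ℤ)

/-- `p` is Walrasian: there is a partition of the items into demanded sets. -/
def IsWalrasian {m n : ℕ} (v : Fin n → Finset (Fin m) → ℕ) (p : Fin m → ℕ) : Prop :=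
  ∃ A : Fin n → Finset (Fin m),
    (∀ i j, i ≠ j → Disjoint (A i) (A j)) ∧
    Finset.univ.biUnion A = Finset.univ ∧
    ∀ i, A i ∈ demand (v i) p

/-- `p + 1_S`. -/
def incr {m : ℕ} (p : Fin m → ℕ) (S : Finset (Fin m)) : Fin m → ℕ :=
  fun j => if j ∈ S then p j + 1 else p j

/-- `p - 1_S`. -/
def decr {m : ℕ} (p : Fin m → ℕ) (S : Finset (Fin m)) : Fin m → ℕ :=
  fun j => if j ∈ S then p j - 1 else p j

/-- `S` is over-demanded at `p`: `l^p(S) > |S|`. -/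
def OverDemanded {m n : ℕ} (v : Fin n → Finset (Fin m) → ℕ) (p : Fin m → ℕ)
    (S : Finset (Fin m)) : Prop :=
  S.card < reqAll v p S

/-- `S` is weakly over-demanded at `p`: `l^p(S) ≥ |S|`. -/
def WeaklyOverDemanded {m n : ℕ} (v : Fin n → Finset (Fin m) → ℕ) (p : Fin m → ℕ)
    (S : Finset (Fin m)) : Prop :=
  S.card ≤ reqAll v p S

/-- `S` is under-demanded at `p`: `h^p(S) < |S|`. -/
def UnderDemanded {m n : ℕ} (v : Fin n → Finset (Fin m) → ℕ) (p : Fin m → ℕ)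
    (S : Finset (Fin m)) : Prop :=
  redAll v p S < S.card

/-- `S` is weakly under-demanded at `p`: `h^p(S) ≤ |S|`. -/
def WeaklyUnderDemanded {m n : ℕ} (v : Fin n → Finset (Fin m) → ℕ) (p : Fin m → ℕ)
    (S : Finset (Fin m)) : Prop :=
  redAll v p S ≤ S.card

/-- `S ∈ ED(p)`: `S` is over-demanded at `p` and no nonempty `T ⊆ S` is weakly
under-demanded at `p + 1_S`. -/
def ExcessDemand {m n : ℕ} (v : Fin n → Finset (Fin m) → ℕ) (p : Fin m → ℕ)
    (S : Finset (Fin m)) : Prop :=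
  OverDemanded v p S ∧
    ∀ T ⊆ S, T ≠ ∅ → ¬ WeaklyUnderDemanded v (incr p S) T

/-- `S ∈ DD(p)`: `S` is under-demanded at `p` and no nonempty `T ⊆ S` is weakly
over-demanded at `p - 1_S`. -/
def DearthDemand {m n : ℕ} (v : Fin n → Finset (Fin m) → ℕ) (p : Fin m → ℕ)
    (S : Finset (Fin m)) : Prop :=
  UnderDemanded v p S ∧
    ∀ T ⊆ S, T ≠ ∅ → ¬ WeaklyOverDemanded v (decr p S) T

/-- `S` is a minimal minimizer for `p`. -/
def MinimalMinimizer {m n : ℕ} (v : Fin n → Finset (Fin m) → ℕ) (p : Fin m → ℕ)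
    (S : Finset (Fin m)) : Prop :=
  lyap v (incr p S) < lyap v p ∧
    (∀ T : Finset (Fin m), lyap v (incr p S) ≤ lyap v (incr p T)) ∧
    ∀ T : Finset (Fin m), T ⊂ S → lyap v (incr p S) < lyap v (incr p T)

/-- `S` is a maximal minimizer for `p`. -/
def MaximalMinimizer {m n : ℕ} (v : Fin n → Finset (Fin m) → ℕ) (p : Fin m → ℕ)
    (S : Finset (Fin m)) : Prop :=
  lyap v (decr p S) < lyap v p ∧
    (∀ T : Finset (Fin m), lyap v (decr p S) ≤ lyap v (decr p T)) ∧
    ∀ T : Finset (Fin m), T ⊂ S → lyap v (decr p S) < lyap v (decr p T)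

section Helpers

variable {m : ℕ} {v : Finset (Fin m) → ℕ} {p : Fin m → ℕ}

lemma mem_demand_iff {D : Finset (Fin m)} :
    D ∈ demand v p ↔ ∀ T, util v p T ≤ util v p D := by
  simp [demand]

lemma util_le_uMax (v : Finset (Fin m) → ℕ) (p : Fin m → ℕ) (X : Finset (Fin m)) :
    util v p X ≤ uMax v p :=
  Finset.le_sup' _ (Finset.mem_univ X)

lemma uMax_eq_util {D : Finset (Fin m)} (hD : D ∈ demand v p) :
    uMax v p = util v p D :=
  le_antisymm (Finset.sup'_le _ _ fun T _ => mem_demand_iff.1 hD T)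
    (Finset.le_sup' _ (Finset.mem_univ D))

lemma mem_demand_of_eq {X : Finset (Fin m)} (h : util v p X = uMax v p) :
    X ∈ demand v p :=
  mem_demand_iff.2 fun T => h ▸ util_le_uMax v p T

lemma req_le {D : Finset (Fin m)} (hD : D ∈ demand v p) (S : Finset (Fin m)) :
    req v p S ≤ (S ∩ D).card := Finset.inf'_le _ hD

lemma le_red {D : Finset (Fin m)} (hD : D ∈ demand v p) (S : Finset (Fin m)) :
    (S ∩ D).card ≤ red v p S := Finset.le_sup' (fun D => (S ∩ D).card) hD

lemma exists_req (v : Finset (Fin m) → ℕ) (p : Fin m → ℕ) (S : Finset (Fin m)) :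
    ∃ D ∈ demand v p, (S ∩ D).card = req v p S := by
  obtain ⟨D, hD, h⟩ := Finset.exists_mem_eq_inf' (demand_nonempty v p) (fun D => (S ∩ D).card)
  exact ⟨D, hD, h.symm⟩

lemma exists_red (v : Finset (Fin m) → ℕ) (p : Fin m → ℕ) (S : Finset (Fin m)) :
    ∃ D ∈ demand v p, (S ∩ D).card = red v p S := by
  obtain ⟨D, hD, h⟩ := Finset.exists_mem_eq_sup' (demand_nonempty v p) (fun D => (S ∩ D).card)
  exact ⟨D, hD, h.symm⟩

lemma req_empty : req v p (∅ : Finset (Fin m)) = 0 := by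
  obtain ⟨D, hD, h⟩ := exists_req v p (∅ : Finset (Fin m))
  simp at h
  omega

lemma sum_incr (T X : Finset (Fin m)) :
    ∑ j ∈ X, ((incr p T j : ℕ) : ℤ) = (∑ j ∈ X, (p j : ℤ)) + ((X ∩ T).card : ℤ) := by
  have h : ∀ j ∈ X, ((incr p T j : ℕ) : ℤ) = (p j : ℤ) + (if j ∈ T then (1 : ℤ) else 0) := by
    intro j _
    simp only [incr]
    split <;> push_cast <;> ring
  rw [Finset.sum_congr rfl h, Finset.sum_add_distrib, Finset.sum_ite_mem]
  simp

lemma util_incr (T X : Finset (Fin m)) :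
    util v (incr p T) X = util v p X - ((X ∩ T).card : ℤ) := by
  unfold util
  rw [sum_incr]
  ring

lemma le_incr (T : Finset (Fin m)) : p ≤ incr p T := by
  intro k
  simp only [incr]
  split <;> omega

lemma uMax_incr_le (T : Finset (Fin m)) : uMax v (incr p T) ≤ uMax v p := by
  apply Finset.sup'_le
  intro X _
  rw [util_incr]
  have := util_le_uMax v p X
  have : (0 : ℤ) ≤ ((X ∩ T).card : ℤ) := Int.ofNat_nonneg _
  omega

lemma uMax_incr_of_free {E T : Finset (Fin m)} (hE : E ∈ demand v p) (h : E ∩ T = ∅) :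
    uMax v (incr p T) = uMax v p := by
  refine le_antisymm (uMax_incr_le T) ?_
  have h1 : util v (incr p T) E = util v p E := by rw [util_incr, h]; simp
  calc uMax v p = util v p E := uMax_eq_util hE
    _ = util v (incr p T) E := h1.symm
    _ ≤ uMax v (incr p T) := util_le_uMax _ _ _

lemma mem_demand_incr_of_free {E T : Finset (Fin m)} (hE : E ∈ demand v p) (h : E ∩ T = ∅) :
    E ∈ demand v (incr p T) := by
  apply mem_demand_of_eq
  rw [util_incr, h, uMax_incr_of_free hE h]
  simp [← uMax_eq_util hE]

/-- If every demanded set contains `j`, raising `j`'s price by one lowers `uMax` by one. -/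
lemma uMax_incr_singleton_of_all {j : Fin m} (h : ∀ D ∈ demand v p, j ∈ D) :
    uMax v (incr p {j}) = uMax v p - 1 := by
  refine le_antisymm ?_ ?_
  · apply Finset.sup'_le
    intro X _
    rw [util_incr]
    by_cases hj : j ∈ X
    · have : X ∩ {j} = {j} := Finset.inter_singleton_of_mem hj
      rw [this]
      have := util_le_uMax v p X
      simp
      omega
    · have : X ∩ {j} = ∅ := by
        ext k; simp only [Finset.mem_inter, Finset.mem_singleton, Finset.notMem_empty,
          iff_false, not_and]
        rintro hk rfl; exact hj hk
      rw [this]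
      have hX : util v p X ≠ uMax v p := by
        intro heq
        exact hj (h X (mem_demand_of_eq heq))
      have := util_le_uMax v p X
      simp
      omega
  · obtain ⟨D, hD⟩ := demand_nonempty v p
    have hjD : j ∈ D := h D hD
    have : util v (incr p {j}) D = util v p D - 1 := by
      rw [util_incr, Finset.inter_singleton_of_mem hjD]; simp
    rw [← uMax_eq_util hD] at this
    rw [← this]
    exact util_le_uMax _ _ _

lemma incr_incr {A B : Finset (Fin m)} (h : Disjoint A B) :
    incr (incr p A) B = incr p (A ∪ B) := by
  funext k
  simp only [incr, Finset.mem_union]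
  by_cases hA : k ∈ A <;> by_cases hB : k ∈ B
  · exact absurd (h.forall_ne_finset hA hB) (by simp)
  all_goals simp [hA, hB]

/-- The key Lyapunov step identity for gross-substitute valuations. -/
lemma key (hgs : GrossSub v) :
    ∀ (S : Finset (Fin m)) (p : Fin m → ℕ),
      uMax v (incr p S) = uMax v p - (req v p S : ℤ) := by
  intro S
  induction S using Finset.induction_on with
  | empty =>
    intro p
    have : incr p ∅ = p := by funext k; simp [incr]
    rw [this, req_empty]
    simp
  | insert j S hjS IH =>
    intro p
    set pS := incr p S with hpS
    set pj := incr p {j} with hpj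
    have hq1 : incr p (insert j S) = incr pS {j} := by
      rw [hpS, incr_incr (Finset.disjoint_singleton_right.2 hjS), Finset.union_comm,
        ← Finset.insert_eq]
    have hq2 : incr p (insert j S) = incr pj S := by
      rw [hpj, incr_incr (Finset.disjoint_singleton_left.2 hjS), ← Finset.insert_eq]
    have hIHp := IH p
    by_cases hall : ∀ F ∈ demand v pS, j ∈ F
    · -- every demanded set at pS contains j
      have huq : uMax v (incr p (insert j S)) = uMax v pS - 1 := by
        rw [hq1]; exact uMax_incr_singleton_of_all hall
      have hreq : req v p (insert j S) = req v p S + 1 := by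
        refine le_antisymm ?_ ?_
        · obtain ⟨D, hD, hDc⟩ := exists_req v p S
          have hDpS : D ∈ demand v pS := by
            apply mem_demand_of_eq
            rw [hpS, util_incr, Finset.inter_comm D S, hDc, ← uMax_eq_util hD, hIHp]
          have hjD : j ∈ D := hall D hDpS
          have : insert j S ∩ D = insert j (S ∩ D) := Finset.insert_inter_of_mem hjD
          have hcard : (insert j S ∩ D).card = (S ∩ D).card + 1 := by
            rw [this, Finset.card_insert_of_notMem (fun hc => hjS (Finset.mem_inter.1 hc).1)]
          have := req_le hD (insert j S)
          omega
        · apply Finset.le_inf'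
          intro D hD
          have h1 : req v p S ≤ (S ∩ D).card := req_le hD S
          rcases Nat.lt_or_ge (S ∩ D).card (req v p S + 1) with hc | hc
          · have hDc : (S ∩ D).card = req v p S := by omega
            have hDpS : D ∈ demand v pS := by
              apply mem_demand_of_eq
              rw [hpS, util_incr, Finset.inter_comm D S, hDc, ← uMax_eq_util hD, hIHp]
            have hjD : j ∈ D := hall D hDpS
            have : insert j S ∩ D = insert j (S ∩ D) := Finset.insert_inter_of_mem hjD
            rw [this, Finset.card_insert_of_notMem (fun hc' => hjS (Finset.mem_inter.1 hc').1)]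
            omega
          · have : (S ∩ D).card ≤ (insert j S ∩ D).card :=
              Finset.card_le_card (Finset.inter_subset_inter (Finset.subset_insert j S)
                (Finset.Subset.refl D))
            omega
      rw [huq, hreq, hIHp]
      push_cast
      ring
    · -- some demanded set at pS avoids j
      push_neg at hall
      obtain ⟨E, hE, hjE⟩ := hall
      have hEfree : E ∩ {j} = ∅ := by
        ext k; simp only [Finset.mem_inter, Finset.mem_singleton, Finset.notMem_empty,
          iff_false, not_and]
        rintro hk rfl; exact hjE hk
      have huq : uMax v (incr p (insert j S)) = uMax v pS := by
        rw [hq1]; exact uMax_incr_of_free hE hEfree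
      -- GS step: some demanded set at p avoids j
      have hD0 : ∃ D₀ ∈ demand v p, j ∉ D₀ := by
        by_contra hcon
        push_neg at hcon
        have h1 : uMax v pj = uMax v p - 1 := uMax_incr_singleton_of_all hcon
        obtain ⟨D, hD⟩ := demand_nonempty v p
        have hjD : j ∈ D := hcon D hD
        have hDpj : D ∈ demand v pj := by
          apply mem_demand_of_eq
          rw [hpj, util_incr, Finset.inter_singleton_of_mem hjD, ← uMax_eq_util hD, h1]
          simp
        have hle : pj ≤ incr p (insert j S) := by
          rw [hq2]; exact le_incr S
        obtain ⟨F, hF, hkeep⟩ := hgs pj (incr p (insert j S)) hle D hDpj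
        have hjF : j ∈ F := by
          apply hkeep j hjD
          rw [hq2]
          simp [incr, hjS]
        -- but F must avoid j
        have h6 : util v (incr p (insert j S)) F = uMax v pS := (uMax_eq_util hF).symm.trans huq
        have h5 : util v (incr p (insert j S)) F = util v pS F - ((F ∩ {j}).card : ℤ) := by
          rw [hq1]; exact util_incr _ _
        have hFcard : F ∩ {j} = {j} := Finset.inter_singleton_of_mem hjF
        have hc1 : ((F ∩ {j}).card : ℤ) = 1 := by rw [hFcard]; simp
        have := util_le_uMax v pS F
        omega
      obtain ⟨D₀, hD₀, hjD₀⟩ := hD0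
      have hD₀free : D₀ ∩ {j} = ∅ := by
        ext k; simp only [Finset.mem_inter, Finset.mem_singleton, Finset.notMem_empty,
          iff_false, not_and]
        rintro hk rfl; exact hjD₀ hk
      have hpjMax : uMax v pj = uMax v p := uMax_incr_of_free hD₀ hD₀free
      have hIHpj := IH pj
      rw [← hq2] at hIHpj
      -- req v pj S = req v p S
      have hreqpj : (req v pj S : ℤ) = (req v p S : ℤ) := by
        have := hIHpj
        rw [huq, hIHp, hpjMax] at this
        omega
      obtain ⟨X, hX, hXc⟩ := exists_req v pj S
      have hXM : util v pj X = uMax v pj := (uMax_eq_util hX).symm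
      have hjX : j ∉ X := by
        intro hj
        have : util v p X = util v pj X + 1 := by
          rw [hpj, util_incr, Finset.inter_singleton_of_mem hj]; simp
        rw [hXM, hpjMax] at this
        have := util_le_uMax v p X
        omega
      have hXfree : X ∩ {j} = ∅ := by
        ext k; simp only [Finset.mem_inter, Finset.mem_singleton, Finset.notMem_empty,
          iff_false, not_and]
        rintro hk rfl; exact hjX hk
      have hXp : X ∈ demand v p := by
        apply mem_demand_of_eq
        have : util v p X = util v pj X := by
          rw [hpj, util_incr, hXfree]; simp
        rw [this, hXM, hpjMax]
      have hreq : req v p (insert j S) = req v p S := by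
        refine le_antisymm ?_ ?_
        · have h1 : insert j S ∩ X = S ∩ X := Finset.insert_inter_of_notMem hjX
          have h2 : req v p (insert j S) ≤ (S ∩ X).card := by
            rw [← h1]; exact req_le hXp (insert j S)
          have h3 : (req v pj S : ℕ) = req v p S := by exact_mod_cast hreqpj
          omega
        · apply Finset.le_inf'
          intro D hD
          have h1 : req v p S ≤ (S ∩ D).card := req_le hD S
          have : (S ∩ D).card ≤ (insert j S ∩ D).card :=
            Finset.card_le_card (Finset.inter_subset_inter (Finset.subset_insert j S)
              (Finset.Subset.refl D))
          omega
      rw [huq, hreq, hIHp]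

/-- Dual identity: the redundant of `T` at `p + 1_T` equals the requirement of `T` at `p`. -/
lemma red_incr (hgs : GrossSub v) (q' : Fin m → ℕ) (T : Finset (Fin m)) :
    red v (incr q' T) T = req v q' T := by
  have hQ : uMax v (incr q' T) = uMax v q' - (req v q' T : ℤ) := key hgs T q'
  refine le_antisymm ?_ ?_
  · apply Finset.sup'_le
    intro D hD
    have h1 : util v (incr q' T) D = uMax v (incr q' T) := (uMax_eq_util hD).symm
    have h2 : util v (incr q' T) D = util v q' D - ((D ∩ T).card : ℤ) := util_incr T D
    have h3 := util_le_uMax v q' D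
    rw [Finset.inter_comm T D]
    omega
  · obtain ⟨D', hD', hc⟩ := exists_req v q' T
    have h1 : util v q' D' = uMax v q' := (uMax_eq_util hD').symm
    have h2 : util v (incr q' T) D' = util v q' D' - ((D' ∩ T).card : ℤ) := util_incr T D'
    have hDq : D' ∈ demand v (incr q' T) := by
      apply mem_demand_of_eq
      rw [h2, h1, Finset.inter_comm D' T, hc, hQ]
    have := le_red hDq T
    omega

end Helpers

section Main

variable {m n : ℕ} {v : Fin n → Finset (Fin m) → ℕ}

lemma lyap_incr (hgs : ∀ i, GrossSub (v i)) (p : Fin m → ℕ) (T : Finset (Fin m)) :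
    lyap v (incr p T) = lyap v p + (T.card : ℤ) - (reqAll v p T : ℤ) := by
  unfold lyap reqAll
  have h1 : ∑ i, uMax (v i) (incr p T) = ∑ i, (uMax (v i) p - (req (v i) p T : ℤ)) :=
    Finset.sum_congr rfl fun i _ => key (hgs i) T p
  have h2 : ∑ j, ((incr p T j : ℕ) : ℤ) = (∑ j, (p j : ℤ)) + ((Finset.univ ∩ T).card : ℤ) :=
    sum_incr T Finset.univ
  have h3 : Finset.univ ∩ T = T := Finset.univ_inter T
  rw [h1, h2, h3, Finset.sum_sub_distrib]
  push_cast
  ring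

end Main

theorem stmt11 {m n : ℕ} (v : Fin n → Finset (Fin m) → ℕ)
    (hzero : ∀ i, v i ∅ = 0) (hmono : ∀ i, MonotoneVal (v i))
    (hgs : ∀ i, GrossSub (v i))
    (p : Fin m → ℕ) (h : ∃ S : Finset (Fin m), OverDemanded v p S) :
    ∃ S : Finset (Fin m), ExcessDemand v p S := by
  classical
  obtain ⟨S₀, hS₀⟩ := h
  set Φ : Finset (Fin m) → ℤ := fun T => lyap v (incr p T) with hΦdef
  have hΦeq : ∀ T, Φ T = lyap v p + (T.card : ℤ) - (reqAll v p T : ℤ) :=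
    fun T => lyap_incr hgs p T
  have hA : (Finset.univ.filter fun T : Finset (Fin m) => ∀ U, Φ T ≤ Φ U).Nonempty := by
    obtain ⟨B, _, hB⟩ := Finset.exists_min_image (Finset.univ : Finset (Finset (Fin m))) Φ
      ⟨∅, Finset.mem_univ ∅⟩
    exact ⟨B, Finset.mem_filter.2 ⟨Finset.mem_univ B, fun U => hB U (Finset.mem_univ U)⟩⟩
  obtain ⟨S, hSmem, hScard⟩ := Finset.exists_min_image _ (fun T : Finset (Fin m) => T.card) hA
  have hSmin : ∀ U, Φ S ≤ Φ U := (Finset.mem_filter.1 hSmem).2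
  have hΦS : Φ S < lyap v p := by
    have h1 : Φ S ≤ Φ S₀ := hSmin S₀
    have h2 : Φ S₀ = lyap v p + (S₀.card : ℤ) - (reqAll v p S₀ : ℤ) := hΦeq S₀
    have h3 : (S₀.card : ℤ) < (reqAll v p S₀ : ℤ) := by exact_mod_cast hS₀
    omega
  refine ⟨S, ?_, ?_⟩
  · -- OverDemanded
    have h1 := hΦeq S
    have : (S.card : ℤ) < (reqAll v p S : ℤ) := by omega
    exact_mod_cast this
  · intro T hTS hTne hWUD
    have hTne' : T.Nonempty := Finset.nonempty_iff_ne_empty.2 hTne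
    set q' : Fin m → ℕ := incr p (S \ T) with hq'def
    have hqq : incr q' T = incr p S := by
      rw [hq'def, incr_incr Finset.sdiff_disjoint, Finset.sdiff_union_of_subset hTS]
    have hred : redAll v (incr p S) T = reqAll v q' T := by
      unfold redAll reqAll
      refine Finset.sum_congr rfl fun i _ => ?_
      rw [← hqq]
      exact red_incr (hgs i) q' T
    have hWUD' : (reqAll v q' T : ℤ) ≤ (T.card : ℤ) := by
      rw [← hred]; exact_mod_cast hWUD
    have hlyap : lyap v (incr q' T) = lyap v q' + (T.card : ℤ) - (reqAll v q' T : ℤ) :=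
      lyap_incr hgs q' T
    have hle : Φ (S \ T) ≤ Φ S := by
      have : Φ S = Φ (S \ T) + (T.card : ℤ) - (reqAll v q' T : ℤ) := by
        rw [hΦdef]
        simp only
        rw [← hqq, hlyap, hq'def]
      omega
    have hmem : S \ T ∈ Finset.univ.filter fun T : Finset (Fin m) => ∀ U, Φ T ≤ Φ U :=
      Finset.mem_filter.2 ⟨Finset.mem_univ _, fun U => le_trans hle (hSmin U)⟩
    have h1 := hScard _ hmem
    have h2 : (S \ T).card < S.card := Finset.card_lt_card (Finset.sdiff_ssubset hTS hTne')
    omega
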